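/- arXiv:2408.04083 — 2 statements merged into one kernel-verified Lean document; each statement's English description precedes it below -/
import Mathlib

section
/- Let G be a normed abelian group, g ∈ G, ε > 0 with |a|+|b| ≥ |g|+ε for all nonzero a,b with a+b = g. Let (Ω, μ) be a measure space and γ : Ω × ℕ → G a measurable multiplicity function such that for μ-a.e. x, the finite sum ∑_n γ(x,n) equals g and γ(x,n) ∉ {g, -g} for all n (with γ(x,n) = 0 for all but finitely many n). Then ∫_Ω ∑_n |γ(x,n)| dμ(x) ≥ (|g|+ε) · μ(Ω). -/
/-!
Fix `x` outside the exceptional null set. Some multiplicity `γ (x, n₀)` is nonzero, and the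
remaining ones sum to `g - γ (x, n₀)`, which is nonzero because `γ (x, n₀) ≠ g`. The splitting
hypothesis applied to these two pieces, followed by the triangle inequality for the remaining
sum, gives `|g| + ε ≤ ∑ₙ |γ(x,n)|` pointwise a.e.; integrating yields the bound.
-/

open MeasureTheory

theorem Finset.le_sum_of_sum_eq_of_forall_ne {G M ι : Type*} [AddCommMonoid G] [AddCommMonoid M]
    [PartialOrder M] [IsOrderedAddMonoid M] (f : G → M) (h_add : ∀ a b, f (a + b) ≤ f a + f b)
    {g : G} {c : M} (hsplit : ∀ a b, a ≠ 0 → b ≠ 0 → a + b = g → c ≤ f a + f b)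
    {s : Finset ι} (hs : s.Nonempty) (v : ι → G) (hsum : ∑ i ∈ s, v i = g)
    (h0 : ∀ i ∈ s, v i ≠ 0) (hne : ∀ i ∈ s, v i ≠ g) :
    c ≤ ∑ i ∈ s, f (v i) := by
  classical
  obtain ⟨i₀, hi₀⟩ := hs
  have hrest : v i₀ + ∑ i ∈ s.erase i₀, v i = g := by rwa [Finset.add_sum_erase s v hi₀]
  have hrest_ne : ∑ i ∈ s.erase i₀, v i ≠ 0 := fun h ↦ hne i₀ hi₀ (by rwa [h, add_zero] at hrest)
  have herase : (s.erase i₀).Nonempty :=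
    Finset.nonempty_iff_ne_empty.2 fun h ↦ hrest_ne (by rw [h, Finset.sum_empty])
  calc c ≤ f (v i₀) + f (∑ i ∈ s.erase i₀, v i) := hsplit _ _ (h0 i₀ hi₀) hrest_ne hrest
    _ ≤ f (v i₀) + ∑ i ∈ s.erase i₀, f (v i) :=
        add_le_add_right (Finset.le_sum_nonempty_of_subadditive f h_add herase v) _
    _ = ∑ i ∈ s, f (v i) := Finset.add_sum_erase s (fun i ↦ f (v i)) hi₀

theorem le_tsum_of_finsum_eq_of_forall_ne {G ι : Type*} [AddCommMonoid G] [Nonempty ι]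
    (f : G → ENNReal) (h_add : ∀ a b, f (a + b) ≤ f a + f b) {g : G} {c : ENNReal}
    (hsplit : ∀ a b, a ≠ 0 → b ≠ 0 → a + b = g → c ≤ f a + f b) (v : ι → G)
    (hfin : (Function.support v).Finite) (hsum : ∑ᶠ i, v i = g) (hne : ∀ i, v i ≠ g) :
    c ≤ ∑' i, f (v i) := by
  have hsum' : ∑ i ∈ hfin.toFinset, v i = g := by rwa [← finsum_eq_sum v hfin]
  -- An empty support would force `g = 0 = v i` for every `i`.
  have hs : hfin.toFinset.Nonempty := by
    refine Finset.nonempty_iff_ne_empty.2 fun h ↦ ?_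
    obtain ⟨i⟩ := ‹Nonempty ι›
    rw [h, Finset.sum_empty] at hsum'
    have hvi : v i = 0 :=
      Function.notMem_support.1 fun hi ↦ by simpa [h] using hfin.mem_toFinset.2 hi
    exact hne i (hvi.trans hsum')
  calc c ≤ ∑ i ∈ hfin.toFinset, f (v i) :=
        Finset.le_sum_of_sum_eq_of_forall_ne f h_add hsplit hs v hsum'
          (fun i hi ↦ hfin.mem_toFinset.1 hi) (fun i _ ↦ hne i)
    _ ≤ ∑' i, f (v i) := ENNReal.sum_le_tsum _

theorem stmt6_general {G : Type*} [AddCommGroup G] (nrm : G → ℝ)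
    (h_add : ∀ x y, nrm (x + y) ≤ nrm x + nrm y)
    (g : G) (ε : ℝ)
    (hstrong : ∀ a b : G, a ≠ 0 → b ≠ 0 → a + b = g → nrm g + ε ≤ nrm a + nrm b)
    {Ω : Type*} [MeasurableSpace Ω] (μ : Measure Ω)
    (γ : Ω × ℕ → G)
    (hae : ∀ᵐ x ∂μ, ({n : ℕ | γ (x, n) ≠ 0}).Finite ∧
      (∑ᶠ n : ℕ, γ (x, n)) = g ∧ ∀ n : ℕ, γ (x, n) ≠ g ∧ γ (x, n) ≠ -g) :
    ENNReal.ofReal (nrm g + ε) * μ Set.univ ≤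
      ∫⁻ x, ∑' n : ℕ, ENNReal.ofReal (nrm (γ (x, n))) ∂μ := by
  have h_add' : ∀ a b, ENNReal.ofReal (nrm (a + b)) ≤
      ENNReal.ofReal (nrm a) + ENNReal.ofReal (nrm b) := fun a b ↦
    (ENNReal.ofReal_le_ofReal (h_add a b)).trans ENNReal.ofReal_add_le
  have hsplit : ∀ a b, a ≠ 0 → b ≠ 0 → a + b = g →
      ENNReal.ofReal (nrm g + ε) ≤ ENNReal.ofReal (nrm a) + ENNReal.ofReal (nrm b) :=
    fun a b ha hb hab ↦
      (ENNReal.ofReal_le_ofReal (hstrong a b ha hb hab)).trans ENNReal.ofReal_add_le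
  have hpointwise : ∀ᵐ x ∂μ,
      ENNReal.ofReal (nrm g + ε) ≤ ∑' n : ℕ, ENNReal.ofReal (nrm (γ (x, n))) := by
    filter_upwards [hae] with x ⟨hfin, hsum, hne⟩
    exact le_tsum_of_finsum_eq_of_forall_ne _ h_add' hsplit _ hfin hsum fun n ↦ (hne n).1
  calc ENNReal.ofReal (nrm g + ε) * μ Set.univ
      = ∫⁻ _, ENNReal.ofReal (nrm g + ε) ∂μ := (lintegral_const _).symm
    _ ≤ _ := lintegral_mono_ae hpointwise

/-- Measure-theoretic core of the projection lemma. If for a.e. `x`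
the multiplicities `γ (x, n)` (finitely many nonzero, none equal to `g` or `-g`)
sum to `g`, then the total mass `∫ ∑_n |γ(x,n)| dμ` is at least `(|g|+ε)·μ(Ω)`. -/
theorem stmt6 {G : Type*} [AddCommGroup G] [MeasurableSpace G] (nrm : G → ℝ)
    (h_nonneg : ∀ x, 0 ≤ nrm x)
    (h_zero : ∀ x, nrm x = 0 ↔ x = 0)
    (h_neg : ∀ x, nrm (-x) = nrm x)
    (h_add : ∀ x y, nrm (x + y) ≤ nrm x + nrm y)
    (g : G) (ε : ℝ) (hε : 0 < ε)
    (hstrong : ∀ a b : G, a ≠ 0 → b ≠ 0 → a + b = g → nrm g + ε ≤ nrm a + nrm b)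
    {Ω : Type*} [MeasurableSpace Ω] (μ : Measure Ω)
    (γ : Ω × ℕ → G) (hmeas : Measurable γ)
    (hae : ∀ᵐ x ∂μ, ({n : ℕ | γ (x, n) ≠ 0}).Finite ∧
      (∑ᶠ n : ℕ, γ (x, n)) = g ∧ ∀ n : ℕ, γ (x, n) ≠ g ∧ γ (x, n) ≠ -g) :
    ENNReal.ofReal (nrm g + ε) * μ Set.univ ≤
      ∫⁻ x, ∑' n : ℕ, ENNReal.ofReal (nrm (γ (x, n))) ∂μ :=
  stmt6_general nrm h_add g ε hstrong μ γ hae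
end

section
/- Let C ⊆ ℝ^d be a closed set with reach(C) = R > 0 and let 0 < r < R. Then the nearest-point projection π_C, restricted to { x : dist(x, C) ≤ r }, is Lipschitz with Lipschitz constant at most R/(R - r). -/
open Metric Filter Topology RealInnerProductSpace

/-- The reach of a closed set `C`: the supremum of radii `R` such that every point
at distance `< R` from `C` has a unique nearest point in `C`. -/
noncomputable def reach {d : ℕ} (C : Set (EuclideanSpace ℝ (Fin d))) : ℝ :=
  sSup {R : ℝ | ∀ x : EuclideanSpace ℝ (Fin d), infDist x C < R →
    ∃! y : EuclideanSpace ℝ (Fin d), y ∈ C ∧ dist x y = infDist x C}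

section Aux

variable {d : ℕ} {C : Set (EuclideanSpace ℝ (Fin d))}

/-- Unpacking the definition of reach: uniqueness of nearest points below `R`. -/
private lemma uniq_of_reach {R : ℝ} (hR : reach C = R) (hRpos : 0 < R) :
    ∀ x : EuclideanSpace ℝ (Fin d), infDist x C < R →
      ∃! y : EuclideanSpace ℝ (Fin d), y ∈ C ∧ dist x y = infDist x C := by
  intro x hx
  set S : Set ℝ := {R : ℝ | ∀ x : EuclideanSpace ℝ (Fin d), infDist x C < R →
    ∃! y : EuclideanSpace ℝ (Fin d), y ∈ C ∧ dist x y = infDist x C} with hSdef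
  have h0 : (0:ℝ) ∈ S := by
    intro z hz
    exact absurd hz (not_lt.2 infDist_nonneg)
  have hsup : sSup S = R := hR
  have hbdd : BddAbove S := by
    by_contra hb
    rw [Real.sSup_of_not_bddAbove hb] at hsup
    exact ne_of_gt hRpos hsup.symm
  obtain ⟨s, hsS, hxs⟩ := exists_lt_of_lt_csSup ⟨0, h0⟩ (by rw [hsup]; exact hx)
  exact hsS x hxs

set_option maxHeartbeats 1000000 in
/-- Ascent lemma: from a point with a unique nearest point, moving away from the
nearest point along the normal direction increases the distance to `C` at rate
arbitrarily close to `1`. -/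
private lemma ascent (hC : IsClosed C) (hCne : C.Nonempty)
    (w p : EuclideanSpace ℝ (Fin d)) (hp : p ∈ C) (hdist : dist w p = infDist w C)
    (hpos : 0 < infDist w C)
    (huniq : ∀ q, q ∈ C → dist w q = infDist w C → q = p)
    {η : ℝ} (hη : 0 < η) (hη1 : η < 1) :
    ∃ ε₀ > 0, ∀ ε : ℝ, 0 < ε → ε < ε₀ →
      infDist w C + (1 - η) * ε ≤ infDist (w + ε • (‖w - p‖⁻¹ • (w - p))) C := by
  set d0 := infDist w C with hd0
  set G : EuclideanSpace ℝ (Fin d) := ‖w - p‖⁻¹ • (w - p) with hG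
  have hwp : ‖w - p‖ = d0 := by rw [← dist_eq_norm, hdist]
  have hGnorm : ‖G‖ = 1 := by
    rw [hG, norm_smul, norm_inv, norm_norm, hwp, inv_mul_cancel₀ (ne_of_gt hpos)]
  by_contra hcon
  push_neg at hcon
  choose ε hε0 hεlt hεbad using fun n : ℕ => hcon (1 / (n + 1)) (by positivity)
  choose q hqC hqdist using fun n : ℕ =>
    hC.exists_infDist_eq_dist hCne (w + ε n • G)
  have hε_le1 : ∀ n : ℕ, ε n ≤ 1 := by
    intro n
    refine (hεlt n).le.trans (div_le_one_of_le₀ ?_ (by positivity))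
    have : (0:ℝ) ≤ (n:ℝ) := Nat.cast_nonneg n
    linarith
  have hεto : Tendsto ε atTop (𝓝 0) := by
    refine squeeze_zero (fun n => (hε0 n).le) (fun n => (hεlt n).le) ?_
    exact tendsto_one_div_add_atTop_nhds_zero_nat
  have hstep : ∀ n : ℕ, dist w (q n) ≤ d0 + 2 * ε n := by
    intro n
    have h1 : dist (w + ε n • G) (q n) < d0 + (1 - η) * ε n := by
      rw [← hqdist n]; exact hεbad n
    have h2 : dist w (w + ε n • G) = ε n := by
      rw [dist_eq_norm]
      have : w - (w + ε n • G) = (-(ε n)) • G := by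
        rw [neg_smul]; abel
      rw [this, norm_smul, hGnorm, mul_one, norm_neg, Real.norm_eq_abs,
        abs_of_pos (hε0 n)]
    calc dist w (q n) ≤ dist w (w + ε n • G) + dist (w + ε n • G) (q n) :=
          dist_triangle _ _ _
      _ ≤ ε n + (d0 + (1 - η) * ε n) := by rw [h2]; linarith
      _ ≤ d0 + 2 * ε n := by nlinarith [hε0 n]
  have hqball : ∀ n, q n ∈ C ∩ closedBall w (d0 + 2) := by
    intro n
    refine ⟨hqC n, ?_⟩
    rw [mem_closedBall, dist_comm]
    have := hstep n
    have := hε_le1 n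
    have := hε0 n
    linarith
  have hK : IsCompact (C ∩ closedBall w (d0 + 2)) :=
    (isCompact_closedBall w (d0 + 2)).of_isClosed_subset
      (hC.inter isClosed_closedBall) Set.inter_subset_right
  obtain ⟨qlim, hqlimmem, φ, hφ, hconv⟩ := hK.tendsto_subseq hqball
  have hεφ : Tendsto (fun n => ε (φ n)) atTop (𝓝 0) := hεto.comp hφ.tendsto_atTop
  have hdq : Tendsto (fun n => dist w (q (φ n))) atTop (𝓝 (dist w qlim)) :=
    tendsto_const_nhds.dist hconv
  have hwqlim : dist w qlim ≤ d0 := by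
    have hg : Tendsto (fun n => d0 + 2 * ε (φ n)) atTop (𝓝 (d0 + 2 * 0)) :=
      tendsto_const_nhds.add (hεφ.const_mul 2)
    have := le_of_tendsto_of_tendsto' hdq (by simpa using hg)
      (fun n => hstep (φ n))
    simpa using this
  have hqlimdist : dist w qlim = d0 := le_antisymm hwqlim (infDist_le_dist_of_mem hqlimmem.1)
  have hqlimp : qlim = p := huniq qlim hqlimmem.1 hqlimdist
  have hinnercont : Continuous (fun v : EuclideanSpace ℝ (Fin d) => ⟪G, w - v⟫) :=
    Continuous.inner continuous_const (continuous_const.sub continuous_id)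
  have hinner : Tendsto (fun n => ⟪G, w - q (φ n)⟫) atTop (𝓝 ⟪G, w - p⟫) := by
    have := (hinnercont.tendsto qlim).comp hconv
    rwa [hqlimp] at this
  have hGwp : ⟪G, w - p⟫ = d0 := by
    rw [hG, real_inner_smul_left, real_inner_self_eq_norm_sq, hwp, pow_two]
    field_simp
  have hlt : d0 * (1 - η / 2) < d0 := by nlinarith
  have hev : ∀ᶠ n in atTop, d0 * (1 - η / 2) < ⟪G, w - q (φ n)⟫ := by
    apply hinner.eventually
    rw [hGwp]
    exact eventually_gt_nhds hlt
  obtain ⟨n, hn⟩ := hev.exists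
  set e := ε (φ n) with he
  set Q := q (φ n) with hQdef
  have hepos : 0 < e := hε0 (φ n)
  have hbad : dist (w + e • G) Q < d0 + (1 - η) * e := by
    rw [← hqdist (φ n)]; exact hεbad (φ n)
  have hwQ : d0 ≤ ‖w - Q‖ := by
    rw [← dist_eq_norm]; exact infDist_le_dist_of_mem (hqC (φ n))
  have hexp : dist (w + e • G) Q ^ 2
      = ‖w - Q‖ ^ 2 + 2 * (e * ⟪G, w - Q⟫) + e ^ 2 := by
    rw [dist_eq_norm]
    have h3 : w + e • G - Q = (w - Q) + e • G := by abel
    rw [h3, norm_add_sq_real, real_inner_smul_right, real_inner_comm,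
      norm_smul, hGnorm, Real.norm_eq_abs, abs_of_pos hepos, mul_one]
  have hDnn : (0:ℝ) ≤ dist (w + e • G) Q := dist_nonneg
  have hsq : dist (w + e • G) Q ^ 2 < (d0 + (1 - η) * e) ^ 2 := by
    have hBpos : 0 < d0 + (1 - η) * e := by nlinarith
    nlinarith [hbad, hDnn]
  have hc : d0 * (1 - η / 2) < ⟪G, w - Q⟫ := hn
  have h1 : d0 ^ 2 ≤ ‖w - Q‖ ^ 2 := by nlinarith
  have h2 : 2 * e * (d0 * (1 - η / 2)) < 2 * e * ⟪G, w - Q⟫ :=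
    mul_lt_mul_of_pos_left hc (by positivity)
  have hfinal : d0 ^ 2 + 2 * e * (d0 * (1 - η / 2)) + e ^ 2 < (d0 + (1 - η) * e) ^ 2 := by
    nlinarith [hexp, hsq, h1, h2]
  have hη2 : η * η < η := by nlinarith
  nlinarith [hfinal, mul_pos (mul_pos hη hepos) hpos, mul_pos (mul_pos hη hepos) hepos,
    mul_pos hepos hepos, mul_pos hepos hpos]

/-- Federer's extension lemma: an empty tangent ball of radius `s` at `a` extends
to empty tangent balls of any radius `σ < R`. -/
private lemma extend (hC : IsClosed C) (hCne : C.Nonempty) {R : ℝ}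
    (hU : ∀ x : EuclideanSpace ℝ (Fin d), infDist x C < R →
      ∃! y : EuclideanSpace ℝ (Fin d), y ∈ C ∧ dist x y = infDist x C)
    {a u : EuclideanSpace ℝ (Fin d)} (ha : a ∈ C) (hu : ‖u‖ = 1)
    {s σ : ℝ} (hs : 0 < s) (hsσ : s ≤ σ) (hσR : σ < R)
    (hds : infDist (a + s • u) C = s) :
    infDist (a + σ • u) C = σ := by
  set z : EuclideanSpace ℝ (Fin d) := a + s • u with hz
  set f : EuclideanSpace ℝ (Fin d) → ℝ := fun w => infDist w C with hf
  set T : ℝ := σ - s with hT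
  have hT0 : 0 ≤ T := by simp [hT]; linarith
  set g : ℝ → ℝ := fun h => sSup (f '' closedBall z h) with hg
  have hfz : f z = s := hds
  have hfle : ∀ h : ℝ, ∀ w ∈ closedBall z h, f w ≤ s + h := by
    intro h w hw
    calc f w ≤ f z + dist w z := infDist_le_infDist_add_dist
      _ ≤ s + h := by rw [hfz]; have := mem_closedBall.1 hw; linarith
  have himg_ne : ∀ h : ℝ, 0 ≤ h → (f '' closedBall z h).Nonempty :=
    fun h hh => ⟨f z, Set.mem_image_of_mem f (mem_closedBall_self hh)⟩
  have hbddA : ∀ h : ℝ, BddAbove (f '' closedBall z h) := by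
    intro h
    exact ⟨s + h, by rintro v ⟨w, hw, rfl⟩; exact hfle h w hw⟩
  have hg_le : ∀ h : ℝ, 0 ≤ h → g h ≤ s + h := by
    intro h hh
    exact csSup_le (himg_ne h hh) (by rintro v ⟨w, hw, rfl⟩; exact hfle h w hw)
  have hg_ge : ∀ h : ℝ, 0 ≤ h → s ≤ g h := by
    intro h hh
    have : f z ∈ f '' closedBall z h := Set.mem_image_of_mem f (mem_closedBall_self hh)
    have := le_csSup (hbddA h) this
    rwa [hfz] at this
  have hg_mono : ∀ h₁ h₂ : ℝ, 0 ≤ h₁ → h₁ ≤ h₂ → g h₁ ≤ g h₂ :=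
    fun h₁ h₂ hh₁ hh₂ => csSup_le_csSup (hbddA h₂) (himg_ne h₁ hh₁)
      (Set.image_mono (closedBall_subset_closedBall hh₂))
  have hmax : ∀ h : ℝ, 0 ≤ h → ∃ w ∈ closedBall z h, f w = g h := by
    intro h hh
    obtain ⟨w, hw, hmax⟩ := (isCompact_closedBall z h).exists_isMaxOn
      ⟨z, mem_closedBall_self hh⟩ (continuous_infDist_pt C).continuousOn
    refine ⟨w, hw, ?_⟩
    have : IsGreatest (f '' closedBall z h) (f w) :=
      ⟨Set.mem_image_of_mem f hw, by rintro v ⟨w', hw', rfl⟩; exact hmax hw'⟩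
    exact (this.csSup_eq).symm
  -- main claim: g T ≥ s + (1-δ) T for every δ ∈ (0,1)
  have key : ∀ δ : ℝ, 0 < δ → δ < 1 → s + (1 - δ) * T ≤ g T := by
    intro δ hδ hδ1
    set A : Set ℝ := {h : ℝ | h ∈ Set.Icc (0:ℝ) T ∧ s + (1 - δ) * h ≤ g h} with hA
    have hA0 : (0:ℝ) ∈ A := by
      refine ⟨⟨le_refl 0, hT0⟩, ?_⟩
      simpa using hg_ge 0 le_rfl
    have hAbdd : BddAbove A := ⟨T, fun h hh => hh.1.2⟩
    set h₀ : ℝ := sSup A with hh₀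
    have hh₀0 : 0 ≤ h₀ := le_csSup hAbdd hA0
    have hh₀T : h₀ ≤ T := csSup_le ⟨0, hA0⟩ fun h hh => hh.1.2
    have hgh₀ : s + (1 - δ) * h₀ ≤ g h₀ := by
      refine le_of_forall_pos_le_add ?_
      intro ε hε
      obtain ⟨h, hhA, hh⟩ := exists_lt_of_lt_csSup ⟨0, hA0⟩
        (show h₀ - ε < sSup A by rw [← hh₀]; linarith)
      have h1 : g h ≤ g h₀ := hg_mono h h₀ hhA.1.1 (le_csSup hAbdd hhA)
      have h2 : s + (1 - δ) * h ≤ g h := hhA.2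
      have h3 : (1 - δ) * (h₀ - ε) ≤ (1 - δ) * h :=
        mul_le_mul_of_nonneg_left hh.le (by linarith)
      have h4 : (1 - δ) * ε ≤ ε := by nlinarith
      nlinarith
    have hh₀T' : h₀ = T := by
      by_contra hne
      have hh₀lt : h₀ < T := lt_of_le_of_ne hh₀T hne
      obtain ⟨w, hwball, hwmax⟩ := hmax h₀ hh₀0
      have hfw : f w = g h₀ := hwmax
      have hfwpos : 0 < f w := by rw [hfw]; linarith [hg_ge h₀ hh₀0]
      have hfwR : f w < R := by
        rw [hfw]
        have := hg_le h₀ hh₀0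
        linarith
      obtain ⟨p, hp, hpu⟩ := hU w hfwR
      have hpC : p ∈ C := hp.1
      have hpd : dist w p = infDist w C := hp.2
      have huniq : ∀ q, q ∈ C → dist w q = infDist w C → q = p :=
        fun q hq hq2 => hpu q ⟨hq, hq2⟩
      obtain ⟨ε₀, hε₀, hstep⟩ := ascent hC hCne w p hpC hpd hfwpos huniq hδ hδ1
      set ε : ℝ := min (ε₀ / 2) (T - h₀) with hε
      have hεpos : 0 < ε := lt_min (by linarith) (by linarith)
      have hεε₀ : ε < ε₀ := lt_of_le_of_lt (min_le_left _ _) (by linarith)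
      have hεT : ε ≤ T - h₀ := min_le_right _ _
      set G : EuclideanSpace ℝ (Fin d) := ‖w - p‖⁻¹ • (w - p) with hG
      have hGnorm : ‖G‖ = 1 := by
        have hwp : ‖w - p‖ = infDist w C := by rw [← dist_eq_norm, hpd]
        rw [hG, norm_smul, norm_inv, norm_norm, hwp, inv_mul_cancel₀ (ne_of_gt hfwpos)]
      have hfw' : infDist (w + ε • G) C ≥ f w + (1 - δ) * ε := by
        have := hstep ε hεpos hεε₀
        exact this
      have hwball' : w + ε • G ∈ closedBall z (h₀ + ε) := by
        rw [mem_closedBall]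
        calc dist (w + ε • G) z ≤ dist (w + ε • G) w + dist w z := dist_triangle _ _ _
          _ ≤ ε + h₀ := by
              have h5 : dist (w + ε • G) w = ε := by
                rw [dist_eq_norm]
                have : w + ε • G - w = ε • G := by abel
                rw [this, norm_smul, hGnorm, mul_one, Real.norm_eq_abs, abs_of_pos hεpos]
              rw [h5]
              have := mem_closedBall.1 hwball; linarith
          _ = h₀ + ε := by ring
      have hmem : f (w + ε • G) ∈ f '' closedBall z (h₀ + ε) :=
        Set.mem_image_of_mem f hwball'
      have hgge : f (w + ε • G) ≤ g (h₀ + ε) := le_csSup (hbddA _) hmem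
      have hAmem : h₀ + ε ∈ A := by
        refine ⟨⟨by linarith, by linarith⟩, ?_⟩
        have : s + (1 - δ) * h₀ + (1 - δ) * ε ≤ f w + (1 - δ) * ε := by
          rw [hfw]; linarith
        nlinarith [hfw', hgge]
      have : h₀ + ε ≤ h₀ := le_csSup hAbdd hAmem
      linarith
    rw [← hh₀T']; exact hgh₀
  have hgT : g T = s + T := by
    refine le_antisymm (hg_le T hT0) ?_
    refine le_of_forall_pos_le_add ?_
    intro ε hε
    set δ : ℝ := min (ε / (T + 1)) (1/2) with hδdef
    have hδpos : 0 < δ := lt_min (by positivity) (by norm_num)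
    have hδ1 : δ < 1 := lt_of_le_of_lt (min_le_right _ _) (by norm_num)
    have h1 := key δ hδpos hδ1
    have h2 : δ * T ≤ ε := by
      have h3 : δ ≤ ε / (T + 1) := min_le_left _ _
      have h4 : δ * T ≤ (ε / (T + 1)) * T := mul_le_mul_of_nonneg_right h3 hT0
      have h5 : (ε / (T + 1)) * T ≤ ε := by
        rw [div_mul_eq_mul_div, div_le_iff₀ (by linarith)]
        nlinarith
      exact le_trans h4 h5
    nlinarith
  obtain ⟨w, hwball, hwmax⟩ := hmax T hT0
  have hfw : f w = s + T := by rw [hwmax, hgT]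
  have hdza : dist z a = s := by
    rw [dist_eq_norm]
    have : z - a = s • u := by rw [hz]; abel
    rw [this, norm_smul, hu, mul_one, Real.norm_eq_abs, abs_of_pos hs]
  have hwa : dist w a ≤ dist w z + s := by
    have := dist_triangle w z a
    rwa [hdza] at this
  have hfwa : f w ≤ dist w a := infDist_le_dist_of_mem ha
  have hwz : dist w z = T := by
    have h1 : dist w z ≤ T := hwball
    have h2 : s + T ≤ dist w z + s := le_trans (hfw ▸ hfwa) hwa
    linarith
  have hwa' : dist w a = s + T := by
    have h1 : s + T ≤ dist w a := hfw ▸ hfwa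
    have h2 : dist w a ≤ T + s := by rw [hwz] at hwa; linarith
    linarith
  -- equality in triangle inequality: w lies on the ray
  have hray : SameRay ℝ (w - z) (z - a) := by
    rw [sameRay_iff_norm_add]
    have h1 : w - z + (z - a) = w - a := by abel
    rw [h1, ← dist_eq_norm, ← dist_eq_norm, ← dist_eq_norm, hwa', hwz, hdza]
    ring
  have hsmul := hray.norm_smul_eq
  have hza : z - a = s • u := by rw [hz]; abel
  have hnwz : ‖w - z‖ = T := by rw [← dist_eq_norm, hwz]
  have hnza : ‖z - a‖ = s := by rw [← dist_eq_norm, hdza]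
  rw [hnwz, hnza, hza] at hsmul
  -- hsmul : T • (s • u) = s • (w - z)
  have hwz' : w - z = T • u := by
    have h6 : s • (w - z) = s • (T • u) := by
      rw [← hsmul, smul_smul, smul_smul, mul_comm]
    exact smul_right_injective _ (ne_of_gt hs) h6
  have hw : w = a + σ • u := by
    rw [sub_eq_iff_eq_add'] at hwz'
    rw [hwz', hz, add_assoc, ← add_smul]
    have : s + T = σ := by rw [hT]; ring
    rw [this]
  have hsTσ : s + T = σ := by rw [hT]; ring
  rw [← hw, ← hsTσ]
  exact hfw

set_option maxHeartbeats 1000000 in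
/-- Federer's key inequality 4.8(7). -/
private lemma key_ineq (hC : IsClosed C) (hCne : C.Nonempty) {R r : ℝ}
    (hU : ∀ x : EuclideanSpace ℝ (Fin d), infDist x C < R →
      ∃! y : EuclideanSpace ℝ (Fin d), y ∈ C ∧ dist x y = infDist x C)
    (hR0 : 0 < R) (hr0 : 0 < r) (hrR : r < R)
    {x a b : EuclideanSpace ℝ (Fin d)} (ha : a ∈ C) (hb : b ∈ C)
    (hax : dist x a = infDist x C) (hxr : infDist x C ≤ r) :
    ⟪x - a, b - a⟫ * (2 * R) ≤ r * ‖b - a‖ ^ 2 := by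
  set dx := infDist x C with hdx
  have hdx0 : 0 ≤ dx := by rw [hdx]; exact infDist_nonneg
  clear_value dx
  rcases eq_or_lt_of_le hdx0 with h0 | hpos
  · -- dx = 0 : x = a
    have hxa : x = a := by
      have : dist x a = 0 := by rw [hax, ← h0]
      exact dist_eq_zero.1 this
    rw [hxa, sub_self]
    simp only [inner_zero_left, zero_mul]
    positivity
  · set u : EuclideanSpace ℝ (Fin d) := dx⁻¹ • (x - a) with hu
    clear_value u
    have hxa : ‖x - a‖ = dx := by rw [← dist_eq_norm, hax]
    have hunorm : ‖u‖ = 1 := by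
      rw [hu, norm_smul, Real.norm_eq_abs, abs_of_pos (inv_pos.2 hpos), hxa,
        inv_mul_cancel₀ (ne_of_gt hpos)]
    have hxau : x = a + dx • u := by
      rw [hu, smul_smul, mul_inv_cancel₀ (ne_of_gt hpos), one_smul]
      abel
    have hds : infDist (a + dx • u) C = dx := by rw [← hxau, ← hdx]
    have claim1 : ∀ σ : ℝ, dx ≤ σ → σ < R → ⟪x - a, b - a⟫ * σ ≤ dx * ‖b - a‖ ^ 2 / 2 := by
      intro σ hσ1 hσ2
      have hext : infDist (a + σ • u) C = σ := extend hC hCne hU ha hunorm hpos hσ1 hσ2 hds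
      have hσ0 : 0 < σ := lt_of_lt_of_le hpos hσ1
      have hdistb : σ ≤ dist (a + σ • u) b := by
        have h' : infDist (a + σ • u) C ≤ dist (a + σ • u) b := infDist_le_dist_of_mem hb
        rwa [hext] at h'
      have hexpand : dist (a + σ • u) b ^ 2
          = ‖a - b‖ ^ 2 + 2 * (σ * ⟪a - b, u⟫) + σ ^ 2 := by
        rw [dist_eq_norm]
        have h7 : a + σ • u - b = (a - b) + σ • u := by abel
        rw [h7, norm_add_sq_real, real_inner_smul_right, norm_smul, hunorm, mul_one,
          Real.norm_eq_abs, abs_of_pos hσ0]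
      have hsq : σ ^ 2 ≤ dist (a + σ • u) b ^ 2 := by
        nlinarith [dist_nonneg (x := a + σ • u) (y := b)]
      have h8 : 0 ≤ ‖a - b‖ ^ 2 + 2 * (σ * ⟪a - b, u⟫) := by nlinarith
      have h9 : ⟪x - a, b - a⟫ = dx * ⟪u, b - a⟫ := by
        have : x - a = dx • u := by rw [hxau]; abel
        rw [this, real_inner_smul_left]
      have h10 : ⟪a - b, u⟫ = -⟪u, b - a⟫ := by
        rw [real_inner_comm]
        have : a - b = -(b - a) := by abel
        rw [this, inner_neg_right]
      have h11 : 2 * (σ * ⟪u, b - a⟫) ≤ ‖a - b‖ ^ 2 := by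
        rw [h10] at h8; linarith
      have h12 : ‖a - b‖ = ‖b - a‖ := norm_sub_rev a b
      rw [h9]
      rw [h12] at h11
      nlinarith
    -- pass to the limit σ → R
    set P := ⟪x - a, b - a⟫ with hP
    set K := dx * ‖b - a‖ ^ 2 / 2 with hK
    have hKnn : 0 ≤ K := by positivity
    have hPR : P * R ≤ K := by
      rcases le_or_gt P 0 with hP0 | hP0
      · have : P * R ≤ 0 := mul_nonpos_of_nonpos_of_nonneg hP0 hR0.le
        linarith
      · by_contra hcon
        push_neg at hcon
        have hKP : K / P < R := by
          rw [div_lt_iff₀ hP0]; nlinarith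
        set σ : ℝ := max dx ((K / P + R) / 2) with hσ
        have hσ1 : dx ≤ σ := le_max_left _ _
        have hσ2 : σ < R := by
          apply max_lt (lt_of_le_of_lt hxr hrR)
          linarith
        have hc1 := claim1 σ hσ1 hσ2
        have hσK : σ ≤ K / P := by
          rw [le_div_iff₀ hP0]
          nlinarith
        have : K / P < σ := lt_of_lt_of_le (by linarith) (le_max_right dx ((K / P + R) / 2))
        linarith
    have hdxr : dx ≤ r := hxr
    have h13 : P * (2 * R) ≤ dx * ‖b - a‖ ^ 2 := by
      rw [hK] at hPR; nlinarith
    nlinarith [sq_nonneg ‖b - a‖]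

end Aux

/-- Federer: If `C ⊆ ℝ^d` is closed with `reach C = R > 0` and
`0 < r < R`, then the nearest-point projection `π` restricted to
`{ x : dist(x, C) ≤ r }` is Lipschitz with constant at most `R/(R-r)`. -/
theorem stmt7 {d : ℕ} (C : Set (EuclideanSpace ℝ (Fin d))) (hC : IsClosed C)
    (hCne : C.Nonempty) (R : ℝ) (hR : reach C = R) (hRpos : 0 < R)
    (r : ℝ) (hr0 : 0 < r) (hrR : r < R)
    (π : EuclideanSpace ℝ (Fin d) → EuclideanSpace ℝ (Fin d))
    (hπ : ∀ x, infDist x C ≤ r → π x ∈ C ∧ dist x (π x) = infDist x C) :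
    ∀ x y : EuclideanSpace ℝ (Fin d), infDist x C ≤ r → infDist y C ≤ r →
      dist (π x) (π y) ≤ (R / (R - r)) * dist x y := by
  have hU := uniq_of_reach hR hRpos
  intro x y hx hy
  obtain ⟨haC, hax⟩ := hπ x hx
  obtain ⟨hbC, hby⟩ := hπ y hy
  set a := π x with hadef
  set b := π y with hbdef
  have k1 : ⟪x - a, b - a⟫ * (2 * R) ≤ r * ‖b - a‖ ^ 2 :=
    key_ineq hC hCne hU hRpos hr0 hrR haC hbC hax hx
  have k2 : ⟪y - b, a - b⟫ * (2 * R) ≤ r * ‖a - b‖ ^ 2 :=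
    key_ineq hC hCne hU hRpos hr0 hrR hbC haC hby hy
  have hflip : ⟪y - b, a - b⟫ = ⟪b - y, b - a⟫ := by
    rw [← inner_neg_neg (𝕜 := ℝ), neg_sub, neg_sub]
  have hsum : ⟪x - a, b - a⟫ + ⟪y - b, a - b⟫
      = ⟪x - y, b - a⟫ + ‖b - a‖ ^ 2 := by
    rw [hflip, ← inner_add_left]
    have h1 : x - a + (b - y) = (x - y) + (b - a) := by abel
    rw [h1, inner_add_left, real_inner_self_eq_norm_sq]
  have hCS : -(‖x - y‖ * ‖b - a‖) ≤ ⟪x - y, b - a⟫ := by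
    have h2 := abs_real_inner_le_norm (x - y) (b - a)
    have h3 := neg_le_of_abs_le h2
    linarith
  have hab : ‖a - b‖ = ‖b - a‖ := norm_sub_rev a b
  set β := ‖b - a‖ with hβ
  have hβnn : 0 ≤ β := norm_nonneg _
  have hdxy : dist x y = ‖x - y‖ := dist_eq_norm x y
  have hdab : dist a b = β := by rw [dist_eq_norm, ← hab]
  have hmain : β ^ 2 * (2 * R) ≤ 2 * r * β ^ 2 + 2 * R * (‖x - y‖ * β) := by
    have h2 : (⟪x - a, b - a⟫ + ⟪y - b, a - b⟫) * (2 * R)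
        ≤ r * β ^ 2 + r * β ^ 2 := by
      rw [hab] at k2
      nlinarith [k1, k2]
    rw [hsum] at h2
    nlinarith [hCS, hRpos]
  rcases eq_or_lt_of_le hβnn with hβ0 | hβpos
  · rw [hdab, ← hβ0]
    have : 0 ≤ (R / (R - r)) * dist x y := by
      apply mul_nonneg _ dist_nonneg
      apply div_nonneg hRpos.le
      linarith
    linarith
  · have hRr : 0 < R - r := by linarith
    rw [hdab, hdxy, div_mul_eq_mul_div, le_div_iff₀ hRr]
    nlinarith [hmain, hβpos]
end
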